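/- Let R be an integral domain that is not a field, with the Macías topology on R \ {0}. If the Jacobson radical of R is zero, then the set of units U(R) is not open in this topology. -/

import Mathlib

/-!
The basic sets satisfy `σ₁⁰ = R \ {0}` and `σ_a⁰ ∩ σ_b⁰ = σ_{ab}⁰`, so they form a basis, and an open
set of units contains some `σₖ⁰ ∋ 1` with `k ≠ 0`. If `k` is a unit, `σₖ⁰` is all of `R \ {0}`, so
`R` is a field. Otherwise `1 + k y ≠ 0` is coprime to `k` for every `y`, hence lies in `σₖ⁰` and is
a unit; thus `k` lies in the Jacobson radical, which is zero.
-/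

/-- For nonzero `k`, the basic set `σₖ⁰ = {s ≠ 0 : ⟨k⟩ + ⟨s⟩ = R}` of the Macías topology. -/
def sigma0 (R : Type*) [CommRing R] (k : R) : Set {x : R // x ≠ 0} :=
  {s | Ideal.span {k} + Ideal.span {s.1} = ⊤}

/-- The Macías topology on `R \ {0}`, generated by the sets `σₖ⁰` for `k ≠ 0`. -/
def maciasTop (R : Type*) [CommRing R] : TopologicalSpace {x : R // x ≠ 0} :=
  TopologicalSpace.generateFrom {U | ∃ k : R, k ≠ 0 ∧ U = sigma0 R k}

section Macias

variable {R : Type*} [CommRing R]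

theorem mem_sigma0_iff {k : R} {s : {x : R // x ≠ 0}} : s ∈ sigma0 R k ↔ IsCoprime k s.1 := by
  rw [← Ideal.isCoprime_span_singleton_iff, Ideal.isCoprime_iff_add, Ideal.one_eq_top]
  rfl

theorem sigma0_one : sigma0 R 1 = Set.univ :=
  Set.eq_univ_of_forall fun _ => mem_sigma0_iff.2 isCoprime_one_left

theorem sigma0_mul (a b : R) : sigma0 R (a * b) = sigma0 R a ∩ sigma0 R b :=
  Set.ext fun _ => by simp only [Set.mem_inter_iff, mem_sigma0_iff, IsCoprime.mul_left_iff]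

theorem isTopologicalBasis_sigma0 [Nontrivial R] [NoZeroDivisors R] :
    @TopologicalSpace.IsTopologicalBasis _ (maciasTop R)
      {U | ∃ k : R, k ≠ 0 ∧ U = sigma0 R k} := by
  refine TopologicalSpace.isTopologicalBasis_of_subbasis_of_finiteInter (t := maciasTop R) rfl
    ⟨⟨1, one_ne_zero, sigma0_one.symm⟩, ?_⟩
  rintro _ ⟨a, ha, rfl⟩ _ ⟨b, hb, rfl⟩
  exact ⟨a * b, mul_ne_zero ha hb, (sigma0_mul a b).symm⟩

theorem isField_of_isUnit_of_sigma0_subset [Nontrivial R] {k : R} (hk : IsUnit k)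
    (hsub : sigma0 R k ⊆ {x | IsUnit x.1}) : IsField R := by
  refine ⟨exists_pair_ne R, mul_comm, fun {a} ha => ?_⟩
  have hmem : (⟨a, ha⟩ : {x : R // x ≠ 0}) ∈ sigma0 R k :=
    mem_sigma0_iff.2 (isCoprime_one_left.of_isCoprime_of_dvd_left hk.dvd)
  exact isUnit_iff_exists_inv.mp (hsub hmem)

theorem mem_jacobson_bot_of_sigma0_subset {k : R} (hk : ¬ IsUnit k)
    (hsub : sigma0 R k ⊆ {x | IsUnit x.1}) : k ∈ (⊥ : Ideal R).jacobson := by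
  refine Ideal.mem_jacobson_bot.2 fun y => ?_
  have hne : k * y + 1 ≠ 0 := fun h =>
    hk (IsUnit.of_mul_eq_one (-y) (by linear_combination -h))
  have hmem : (⟨k * y + 1, hne⟩ : {x : R // x ≠ 0}) ∈ sigma0 R k :=
    mem_sigma0_iff.2 (show IsCoprime k (k * y + 1) from ⟨-y, 1, by ring⟩)
  exact hsub hmem

end Macias

theorem stmt7 (R : Type*) [CommRing R] [IsDomain R] (hnf : ¬ IsField R)
    (hJ : (⊥ : Ideal R).jacobson = ⊥) :
    ¬ @IsOpen _ (maciasTop R) {x : {x : R // x ≠ 0} | IsUnit x.1} := by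
  let _ := maciasTop R
  intro hopen
  obtain ⟨_, ⟨k, hk, rfl⟩, -, hsub⟩ :=
    isTopologicalBasis_sigma0.exists_subset_of_mem_open (a := ⟨1, one_ne_zero⟩) isUnit_one hopen
  by_cases hku : IsUnit k
  · exact hnf (isField_of_isUnit_of_sigma0_subset hku hsub)
  · simpa [hJ, hk] using mem_jacobson_bot_of_sigma0_subset hku hsub
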